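/- Let q be a prime power and Δ = ({1,…,ℓ}, 𝓕) a simplicial complex containing every singleton. Suppose e = {i₁,i₂} is a 2-element face of Δ that is maximal, i.e., contained in no strictly larger face. Let Δ∖e be the simplicial complex with face set 𝓕∖{e}, and let Δ/e be the simplicial complex on {1,…,ℓ}∖{i₂} whose faces are the sets σ(F) for F ∈ 𝓕, where σ fixes every point except that it sends i₂ to i₁. Then for every integer t, χ(S_Δ^q, t) = χ(S_{Δ∖e}^q, t) − (q−1)·χ(S_{Δ/e}^q, t). -/

import Mathlib

/-!
Deletion–restriction: if `H ∉ B` and `φ` is an injective linear map onto `H`, then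
`χ(B ∪ {H}) = χ(B) − χ(φ*B)`, where `φ*B` is `B` pulled back along `φ`, with coinciding
hyperplanes merged (merging does not change the alternating sum over subsets).

The arrangement `S_Δ` is `S_{Δ∖e}` together with the `q − 1` hyperplanes
`H_c : x_{i₁} + c x_{i₂} = 0`, `c ≠ 0`. Add them one at a time, and parametrize `H_c` by the
coordinates other than `x_{i₂}`. Every arrangement `B` met along the way satisfies
`S_{Δ∖e} ⊆ B ⊆ S_Δ ∖ {H_c}`, and its pullback is exactly `S_{Δ/e}`: the pullback of a form `a`
is supported on `σ(supp a)` (if `i₁, i₂ ∈ supp a`, then `ker a = H_{c'}` with `c' ≠ c` by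
maximality of `e`, so the coefficient at `i₁` does not cancel), and conversely
every form of `Δ/e` lifts to a form supported on a face of `Δ∖e`. Hence each of the `q − 1`
steps subtracts `χ(S_{Δ/e}, t)`.
-/

open Finset
open scoped Classical

/-- The characteristic polynomial of a finite set of (hyper)planes, evaluated at an
integer `t`:  `χ(A,t) = Σ_{I ⊆ A} (−1)^{|I|} t^{dim ∩_{H ∈ I} H}`, the empty
intersection being the whole space. -/
noncomputable def chi {K V : Type} [Field K] [Fintype V]
    (A : Finset (Submodule K (V → K))) (t : ℤ) : ℤ :=
  ∑ I ∈ A.powerset, (-1) ^ I.card * t ^ (Module.finrank K ↥(I.inf id))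
/-- The kernel of the linear form `x ↦ ∑ i, a i * x i`. -/
noncomputable def kerForm {K V : Type} [Field K] [Fintype V] (a : V → K) :
    Submodule K (V → K) :=
  LinearMap.ker (∑ i, a i • (LinearMap.proj i : (V → K) →ₗ[K] K))

/-- The arrangement `S_Δ^q` attached to a simplicial complex with face set `𝓕`:
all hyperplanes `ker (a_{i₁} x_{i₁} + ⋯ + a_{i_r} x_{i_r})` where `{i₁, …, i_r}`
runs over the nonempty faces and the `a`'s run over the nonzero field elements. -/
noncomputable def SArr (K : Type) [Field K] [Fintype K] {V : Type} [Fintype V]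
    (𝓕 : Finset (Finset V)) : Finset (Submodule K (V → K)) :=
  (𝓕.filter fun s => s.Nonempty).biUnion fun s =>
    ((Finset.univ : Finset (V → K)).filter
      (fun a => ∀ i, (i ∈ s → a i ≠ 0) ∧ (i ∉ s → a i = 0))).image kerForm

section InclusionExclusion
variable {α β : Type*} [DecidableEq α] [DecidableEq β]

theorem sum_powerset_neg_one_pow_mul_insert_of_mem {B : Finset α} {b : α} (hb : b ∈ B)
    (g : Finset α → ℤ) : ∑ K ∈ B.powerset, (-1 : ℤ) ^ #K * g (insert b K) = 0 := by
  rw [← insert_erase hb, sum_powerset_insert (notMem_erase b B), ← sum_add_distrib]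
  refine sum_eq_zero fun K hK => ?_
  have hbK : b ∉ K := fun h => notMem_erase b B (mem_powerset.mp hK h)
  rw [card_insert_of_notMem hbK, insert_idem]
  ring_nf

theorem sum_powerset_neg_one_pow_mul_image (f : α → β) (A : Finset α) (g : Finset β → ℤ) :
    ∑ J ∈ A.powerset, (-1 : ℤ) ^ #J * g (J.image f)
      = ∑ K ∈ (A.image f).powerset, (-1 : ℤ) ^ #K * g K := by
  induction A using Finset.induction_on generalizing g with
  | empty => simp
  | @insert a A ha ih =>
    have hinsert : ∀ J ∈ A.powerset, (-1 : ℤ) ^ #(insert a J) * g ((insert a J).image f)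
        = -((-1 : ℤ) ^ #J * g (insert (f a) (J.image f))) := fun J hJ => by
      rw [card_insert_of_notMem fun h => ha (mem_powerset.mp hJ h), image_insert]
      ring
    rw [sum_powerset_insert ha, sum_congr rfl hinsert, sum_neg_distrib, ih,
      ih fun K => g (insert (f a) K), image_insert]
    by_cases hfa : f a ∈ A.image f
    · rw [insert_eq_self.mpr hfa, sum_powerset_neg_one_pow_mul_insert_of_mem hfa, neg_zero,
        add_zero]
    · have hinsert' : ∀ K ∈ (A.image f).powerset,
          (-1 : ℤ) ^ #(insert (f a) K) * g (insert (f a) K)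
            = -((-1 : ℤ) ^ #K * g (insert (f a) K)) := fun K hK => by
        rw [card_insert_of_notMem fun h => hfa (mem_powerset.mp hK h)]
        ring
      rw [sum_powerset_insert hfa, sum_congr rfl hinsert', sum_neg_distrib]

theorem apply_union_eq_sub_card_mul (f : Finset α → ℤ) (x : ℤ) {A E : Finset α}
    (hAE : Disjoint A E)
    (h : ∀ H ∈ E, ∀ B, A ⊆ B → B ⊆ A ∪ E → H ∉ B → f (insert H B) = f B - x) :
    f (A ∪ E) = f A - #E * x := by
  induction E using Finset.induction_on with
  | empty => simp
  | @insert H E hHE ih =>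
    have hHA : H ∉ A := disjoint_right.mp hAE (mem_insert_self H E)
    rw [union_insert, h H (mem_insert_self H E) _ subset_union_left
        (union_subset_union_right (subset_insert H E)) (by simp [hHA, hHE]),
      ih (disjoint_of_subset_right (subset_insert H E) hAE)
        fun H' hH' B hAB hBE => h H' (mem_insert_of_mem hH') B hAB
          (hBE.trans (union_subset_union_right (subset_insert H E))),
      card_insert_of_notMem hHE]
    push_cast
    ring

end InclusionExclusion

section DeletionRestriction
variable {K V W : Type} [Field K] [Fintype V] [Fintype W]

theorem finrank_comap_of_injective {M N : Type*} [AddCommGroup M] [Module K M] [AddCommGroup N]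
    [Module K N] {φ : M →ₗ[K] N} (hφ : Function.Injective φ) (U : Submodule K N) :
    Module.finrank K (U.comap φ) = Module.finrank K ↥(LinearMap.range φ ⊓ U) := by
  rw [(Submodule.equivMapOfInjective φ hφ _).finrank_eq, Submodule.map_comap_eq]

theorem chi_insert (B : Finset (Submodule K (V → K))) {H : Submodule K (V → K)} (hH : H ∉ B)
    {φ : (W → K) →ₗ[K] (V → K)} (hφ : Function.Injective φ) (hrange : LinearMap.range φ = H)
    (t : ℤ) : chi (insert H B) t = chi B t - chi (B.image (Submodule.comap φ)) t := by
  have hrestrict : ∀ J ∈ B.powerset,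
      (-1 : ℤ) ^ #(insert H J) * t ^ Module.finrank K ↥((insert H J).inf id)
        = -((-1 : ℤ) ^ #J * t ^ Module.finrank K ↥((J.image (Submodule.comap φ)).inf id)) :=
    fun J hJ => by
      rw [card_insert_of_notMem fun h => hH (mem_powerset.mp hJ h), inf_insert, id, ← hrange,
        ← finrank_comap_of_injective hφ, inf_image, Finset.apply_inf_eq_inf_comp _
          (fun _ _ => Submodule.comap_inf _ _ _) (Submodule.comap_top _), Function.comp_id,
        Function.id_comp]
      ring
  rw [chi, sum_powerset_insert hH, sum_congr rfl hrestrict, sum_neg_distrib, chi, chi]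
  linear_combination -sum_powerset_neg_one_pow_mul_image (Submodule.comap φ) B
    fun I => t ^ Module.finrank K ↥(I.inf id)

end DeletionRestriction

section Forms
variable {K V : Type} [Field K] [Fintype V]

noncomputable def supp (a : V → K) : Finset V := univ.filter fun i => a i ≠ 0

theorem mem_supp {a : V → K} {i : V} : i ∈ supp a ↔ a i ≠ 0 := by simp [supp]

theorem mem_kerForm {a x : V → K} : x ∈ kerForm a ↔ ∑ i, a i * x i = 0 := by
  simp [kerForm]

theorem kerForm_smul {c : K} (hc : c ≠ 0) (a : V → K) : kerForm (c • a) = kerForm a := by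
  ext x
  simp only [mem_kerForm, Pi.smul_apply, smul_eq_mul, mul_assoc, ← mul_sum, mul_eq_zero, hc,
    false_or]

theorem supp_eq_of_kerForm_eq {a b : V → K} (h : kerForm a = kerForm b) : supp a = supp b := by
  have hsingle : ∀ (a : V → K) j, Pi.single j 1 ∈ kerForm a ↔ a j = 0 := fun a j => by
    simp [mem_kerForm, Pi.single_apply]
  ext j
  rw [mem_supp, mem_supp, not_iff_not, ← hsingle, ← hsingle, h]

theorem mem_SArr [Fintype K] {𝓕 : Finset (Finset V)} {H : Submodule K (V → K)} :
    H ∈ SArr K 𝓕 ↔ ∃ a : V → K, (supp a).Nonempty ∧ supp a ∈ 𝓕 ∧ kerForm a = H := by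
  have hsupp : ∀ (a : V → K) (s : Finset V),
      (∀ i, (i ∈ s → a i ≠ 0) ∧ (i ∉ s → a i = 0)) ↔ supp a = s := fun a s => by
    simp only [Finset.ext_iff, mem_supp]
    exact forall_congr' fun i => ⟨fun h => ⟨fun ha => by_contra fun hi => ha (h.2 hi), h.1⟩,
      fun h => ⟨h.2, fun hi => by_contra fun ha => hi (h.1 ha)⟩⟩
  simp only [SArr, mem_biUnion, mem_filter, mem_image, mem_univ, true_and, hsupp]
  constructor
  · rintro ⟨s, ⟨hs, hne⟩, a, rfl, rfl⟩
    exact ⟨a, hne, hs, rfl⟩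
  · rintro ⟨a, hne, hs, rfl⟩
    exact ⟨supp a, ⟨hs, hne⟩, a, rfl, rfl⟩

end Forms

section Collapse
variable {V : Type} [DecidableEq V] {i₁ i₂ : V}

def collapse (i₁ i₂ : V) (i : V) : V := if i = i₂ then i₁ else i

theorem collapse_ne (hne : i₁ ≠ i₂) (i : V) : collapse i₁ i₂ i ≠ i₂ := by
  unfold collapse
  split_ifs with h
  · exact hne
  · exact h

theorem mem_image_collapse_of_ne {s : Finset V} {i : V} (h₁ : i ≠ i₁) (h₂ : i ≠ i₂) :
    i ∈ s.image (collapse i₁ i₂) ↔ i ∈ s := by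
  simp only [mem_image, collapse]
  constructor
  · rintro ⟨j, hj, hji⟩
    split_ifs at hji with h
    · exact absurd hji.symm h₁
    · exact hji ▸ hj
  · exact fun hi => ⟨i, hi, if_neg h₂⟩

theorem mem_image_collapse_self (hne : i₁ ≠ i₂) {s : Finset V} :
    i₁ ∈ s.image (collapse i₁ i₂) ↔ i₁ ∈ s ∨ i₂ ∈ s := by
  simp only [mem_image, collapse]
  constructor
  · rintro ⟨j, hj, hji⟩
    split_ifs at hji with h
    · exact Or.inr (h ▸ hj)
    · exact Or.inl (hji ▸ hj)
  · rintro (h | h)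
    · exact ⟨i₁, h, if_neg hne⟩
    · exact ⟨i₂, h, if_pos rfl⟩

def contractFaces (i₁ i₂ : V) (𝓕 : Finset (Finset V)) :
    Finset (Finset {i // i ≠ i₂}) :=
  𝓕.image fun s => (s.image (collapse i₁ i₂)).subtype fun i => i ≠ i₂

end Collapse

section EdgeContraction
variable {K V : Type} [Field K] [DecidableEq V] {i₁ i₂ : V}

def edgeForm (i₁ i₂ : V) (c : K) : V → K := Pi.single i₁ 1 + Pi.single i₂ c

noncomputable def edgeParam (hne : i₁ ≠ i₂) (c : K) :
    ({i // i ≠ i₂} → K) →ₗ[K] (V → K) where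
  toFun y i := if h : i = i₂ then -c⁻¹ * y ⟨i₁, hne⟩ else y ⟨i, h⟩
  map_add' y z := by funext i; by_cases h : i = i₂ <;> simp [h, mul_add]
  map_smul' r y := by funext i; by_cases h : i = i₂ <;> simp [h, mul_left_comm]

@[simp]
theorem edgeParam_apply_self (hne : i₁ ≠ i₂) (c : K) (y : {i // i ≠ i₂} → K) :
    edgeParam hne c y i₂ = -c⁻¹ * y ⟨i₁, hne⟩ := by simp [edgeParam]

@[simp]
theorem edgeParam_apply_of_ne (hne : i₁ ≠ i₂) (c : K) (y : {i // i ≠ i₂} → K) {i : V}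
    (h : i ≠ i₂) : edgeParam hne c y i = y ⟨i, h⟩ := by simp [edgeParam, h]

theorem edgeParam_injective (hne : i₁ ≠ i₂) (c : K) : Function.Injective (edgeParam hne c) :=
  fun y z h => funext fun i => by
    simpa [i.2] using congrFun h i

noncomputable def contractForm (i₁ i₂ : V) (c : K) (a : V → K) : {i // i ≠ i₂} → K :=
  fun i => a i - if (i : V) = i₁ then a i₂ * c⁻¹ else 0

noncomputable def liftForm (i₁ i₂ : V) (c μ : K) (b : {i // i ≠ i₂} → K) : V → K :=
  fun i => if h : i = i₂ then μ else b ⟨i, h⟩ + if i = i₁ then μ * c⁻¹ else 0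

theorem contractForm_liftForm (c μ : K) (b : {i // i ≠ i₂} → K) :
    contractForm i₁ i₂ c (liftForm i₁ i₂ c μ b) = b :=
  funext fun i => by simp [contractForm, liftForm, i.2]

variable [Fintype V]

theorem mem_kerForm_edgeForm {c : K} {x : V → K} :
    x ∈ kerForm (edgeForm i₁ i₂ c) ↔ x i₁ + c * x i₂ = 0 := by
  simp [mem_kerForm, edgeForm, add_mul, sum_add_distrib, Pi.single_apply]

theorem supp_edgeForm (hne : i₁ ≠ i₂) {c : K} (hc : c ≠ 0) :
    supp (edgeForm i₁ i₂ c) = {i₁, i₂} := by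
  ext i
  by_cases h₁ : i = i₁
  · simp [mem_supp, edgeForm, h₁, hne]
  · by_cases h₂ : i = i₂
    · subst h₂; simp [mem_supp, edgeForm, h₁, hc]
    · simp [mem_supp, edgeForm, h₁, h₂]

theorem kerForm_eq_kerForm_edgeForm (hne : i₁ ≠ i₂) {a : V → K} (ha : supp a = {i₁, i₂}) :
    kerForm a = kerForm (edgeForm i₁ i₂ (a i₂ / a i₁)) := by
  have hsupp : ∀ i, a i ≠ 0 ↔ i = i₁ ∨ i = i₂ := fun i => by
    rw [← mem_supp, ha, mem_insert, mem_singleton]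
  have ha₁ : a i₁ ≠ 0 := (hsupp i₁).mpr (Or.inl rfl)
  have hscale : a = a i₁ • edgeForm i₁ i₂ (a i₂ / a i₁) := funext fun i => by
    by_cases h₁ : i = i₁
    · subst h₁; simp [edgeForm, hne.symm]
    · by_cases h₂ : i = i₂
      · subst h₂; simp [edgeForm, h₁, mul_div_cancel₀ _ ha₁]
      · simp [edgeForm, h₁, h₂, not_not.mp (mt (hsupp i).mp (by tauto))]
  exact (congrArg kerForm hscale).trans (kerForm_smul ha₁ _)

theorem kerForm_edgeForm_injective (hne : i₁ ≠ i₂) :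
    Function.Injective fun c : K => kerForm (edgeForm i₁ i₂ c) := by
  intro c c' (h : kerForm (edgeForm i₁ i₂ c) = kerForm (edgeForm i₁ i₂ c'))
  have hx : ∀ c', Pi.single i₁ (-c) + Pi.single i₂ 1 ∈ kerForm (edgeForm i₁ i₂ c') ↔ c' = c :=
    fun c' => by simp [mem_kerForm_edgeForm, hne, hne.symm, neg_add_eq_zero, eq_comm]
  exact ((hx c').mp (h ▸ (hx c).mpr rfl)).symm

theorem range_edgeParam (hne : i₁ ≠ i₂) {c : K} (hc : c ≠ 0) :
    LinearMap.range (edgeParam hne c) = kerForm (edgeForm i₁ i₂ c) := by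
  ext x
  rw [mem_kerForm_edgeForm, LinearMap.mem_range]
  constructor
  · rintro ⟨y, rfl⟩
    simp only [hne, ne_eq, not_false_eq_true, edgeParam_apply_of_ne, edgeParam_apply_self]
    field_simp
    ring
  · intro hx
    refine ⟨fun i => x i, funext fun i => ?_⟩
    by_cases h : i = i₂
    · subst h
      simp only [edgeParam_apply_self]
      rw [eq_neg_of_add_eq_zero_left hx]
      field_simp
    · simp [h]

theorem comap_edgeParam_kerForm (hne : i₁ ≠ i₂) (c : K) (a : V → K) :
    (kerForm a).comap (edgeParam hne c) = kerForm (contractForm i₁ i₂ c a) := by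
  ext y
  have hsplit : ∑ i, a i * edgeParam hne c y i
      = ∑ i : {i // i ≠ i₂}, a i * y i + a i₂ * edgeParam hne c y i₂ := by
    rw [← sum_erase_add univ _ (mem_univ i₂), sum_subtype (univ.erase i₂) (p := (· ≠ i₂))
      (by simp)]
    exact congrArg (· + _) (sum_congr rfl fun i _ => by rw [edgeParam_apply_of_ne hne c y i.2])
  have hi₁ : ∀ i : {i // i ≠ i₂}, (i : V) = i₁ ↔ i = ⟨i₁, hne⟩ := fun i =>
    ⟨fun h => Subtype.ext h, fun h => h ▸ rfl⟩
  rw [Submodule.mem_comap, mem_kerForm, mem_kerForm, hsplit]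
  simp only [contractForm, sub_mul, sum_sub_distrib, ite_mul, zero_mul, hi₁, sum_ite_eq',
    mem_univ, if_true, edgeParam_apply_self]
  ring_nf

theorem supp_contractForm (hne : i₁ ≠ i₂) {c : K} (hc : c ≠ 0) {a : V → K}
    (hmax : {i₁, i₂} ⊆ supp a → supp a = {i₁, i₂})
    (hker : kerForm a ≠ kerForm (edgeForm i₁ i₂ c)) :
    supp (contractForm i₁ i₂ c a) = ((supp a).image (collapse i₁ i₂)).subtype (· ≠ i₂) := by
  ext i
  rw [mem_subtype, mem_supp]
  by_cases h₁ : (i : V) = i₁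
  · rw [h₁, mem_image_collapse_self hne, mem_supp, mem_supp]
    simp only [contractForm, h₁, if_true]
    by_cases ha₁ : a i₁ = 0
    · simp [ha₁, hc]
    by_cases ha₂ : a i₂ = 0
    · simp [ha₁, ha₂]
    -- by maximality of the edge, `kerForm a` is an edge hyperplane other than `c`'s
    have hedge := hmax (by simp [insert_subset_iff, mem_supp, ha₁, ha₂])
    have hratio : a i₂ / a i₁ ≠ c := fun h => hker (h ▸ kerForm_eq_kerForm_edgeForm hne hedge)
    refine iff_of_true (fun h => hratio ?_) (Or.inl ha₁)
    rw [sub_eq_zero, eq_mul_inv_iff_mul_eq₀ hc] at h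
    rw [div_eq_iff ha₁, ← h, mul_comm]
  · simp only [contractForm, h₁, if_false, sub_zero]
    rw [mem_image_collapse_of_ne h₁ i.2, mem_supp]

theorem supp_liftForm (hne : i₁ ≠ i₂) {c : K} (hc : c ≠ 0) {s : Finset V}
    (hs : ¬{i₁, i₂} ⊆ s) {b : {i // i ≠ i₂} → K}
    (hb : supp b = (s.image (collapse i₁ i₂)).subtype (· ≠ i₂)) :
    supp (liftForm i₁ i₂ c (if i₂ ∈ s then -c * b ⟨i₁, hne⟩ else 0) b) = s := by
  have hb' : ∀ i (h : i ≠ i₂), b ⟨i, h⟩ ≠ 0 ↔ i ∈ s.image (collapse i₁ i₂) := fun i h => by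
    rw [← mem_supp, hb, mem_subtype]
  have hb₁ := hb' i₁ hne
  rw [mem_image_collapse_self hne] at hb₁
  ext i
  rw [mem_supp]
  by_cases h₂ : i = i₂
  · subst h₂
    by_cases hi : i ∈ s <;> simp [liftForm, hi, hc, hb₁]
  by_cases h₁ : i = i₁
  · subst h₁
    by_cases hi₂ : i₂ ∈ s
    · have hi : i ∉ s := fun hi => hs (insert_subset hi (singleton_subset_iff.mpr hi₂))
      simp only [liftForm, hne, ↓reduceDIte, ↓reduceIte, hi₂, hi, iff_false, not_not]
      field_simp
      ring
    · simp [liftForm, hne, hi₂, hb₁]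
  · simp [liftForm, h₁, h₂, hb' i h₂, mem_image_collapse_of_ne h₁ h₂]

variable [Fintype K]

variable (K) in
noncomputable def edgeHyperplanes (i₁ i₂ : V) : Finset (Submodule K (V → K)) :=
  (univ.erase 0).image fun c => kerForm (edgeForm i₁ i₂ c)

theorem mem_edgeHyperplanes {H : Submodule K (V → K)} :
    H ∈ edgeHyperplanes K i₁ i₂ ↔ ∃ c ≠ 0, kerForm (edgeForm i₁ i₂ c) = H := by
  simp [edgeHyperplanes]

theorem card_edgeHyperplanes (hne : i₁ ≠ i₂) :
    #(edgeHyperplanes K i₁ i₂) = Fintype.card K - 1 := by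
  rw [edgeHyperplanes, card_image_of_injective _ (kerForm_edgeForm_injective hne),
    card_erase_of_mem (mem_univ 0), card_univ]

theorem SArr_eq_SArr_erase_union (hne : i₁ ≠ i₂) {𝓕 : Finset (Finset V)} (he : {i₁, i₂} ∈ 𝓕) :
    SArr K 𝓕 = SArr K (𝓕.erase {i₁, i₂}) ∪ edgeHyperplanes K i₁ i₂ := by
  ext H
  simp only [mem_union, mem_SArr, mem_edgeHyperplanes, mem_erase]
  constructor
  · rintro ⟨a, hne', ha, rfl⟩
    by_cases hedge : supp a = {i₁, i₂}
    · have hsupp : ∀ i ∈ ({i₁, i₂} : Finset V), a i ≠ 0 := fun i hi => mem_supp.mp (hedge ▸ hi)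
      exact Or.inr ⟨a i₂ / a i₁, div_ne_zero (hsupp i₂ (by simp)) (hsupp i₁ (by simp)),
        (kerForm_eq_kerForm_edgeForm hne hedge).symm⟩
    · exact Or.inl ⟨a, hne', ⟨hedge, ha⟩, rfl⟩
  · rintro (⟨a, hne', ⟨-, ha⟩, rfl⟩ | ⟨c, hc, rfl⟩)
    · exact ⟨a, hne', ha, rfl⟩
    · exact ⟨edgeForm i₁ i₂ c, by simp [supp_edgeForm hne hc], supp_edgeForm hne hc ▸ he, rfl⟩

theorem disjoint_SArr_erase_edgeHyperplanes (hne : i₁ ≠ i₂) (𝓕 : Finset (Finset V)) :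
    Disjoint (SArr K (𝓕.erase {i₁, i₂})) (edgeHyperplanes K i₁ i₂) := by
  refine disjoint_left.mpr fun H hH hHe => ?_
  obtain ⟨a, -, ha, rfl⟩ := mem_SArr.mp hH
  obtain ⟨c, hc, hac⟩ := mem_edgeHyperplanes.mp hHe
  rw [supp_eq_of_kerForm_eq hac.symm, supp_edgeForm hne hc] at ha
  exact notMem_erase _ _ ha

theorem comap_edgeParam_mem_SArr_contractFaces (hne : i₁ ≠ i₂) {c : K} (hc : c ≠ 0)
    {𝓕 : Finset (Finset V)} (hmax : ∀ s ∈ 𝓕, {i₁, i₂} ⊆ s → s = {i₁, i₂})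
    {H : Submodule K (V → K)} (hH : H ∈ SArr K 𝓕) (hHc : H ≠ kerForm (edgeForm i₁ i₂ c)) :
    H.comap (edgeParam hne c) ∈ SArr K (contractFaces i₁ i₂ 𝓕) := by
  obtain ⟨a, ⟨j, hj⟩, ha, rfl⟩ := mem_SArr.mp hH
  have hsupp := supp_contractForm hne hc (hmax _ ha) hHc
  rw [comap_edgeParam_kerForm, mem_SArr]
  refine ⟨contractForm i₁ i₂ c a, ?_, hsupp ▸ mem_image_of_mem _ ha, rfl⟩
  rw [hsupp]
  exact ⟨⟨collapse i₁ i₂ j, collapse_ne hne j⟩, mem_subtype.mpr (mem_image_of_mem _ hj)⟩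

theorem exists_mem_SArr_erase_comap_eq (hne : i₁ ≠ i₂) {c : K} (hc : c ≠ 0)
    {𝓕 : Finset (Finset V)} (hsingle : ∀ i, {i} ∈ 𝓕)
    (hmax : ∀ s ∈ 𝓕, {i₁, i₂} ⊆ s → s = {i₁, i₂})
    {H' : Submodule K ({i // i ≠ i₂} → K)} (hH' : H' ∈ SArr K (contractFaces i₁ i₂ 𝓕)) :
    ∃ H ∈ SArr K (𝓕.erase {i₁, i₂}), H.comap (edgeParam hne c) = H' := by
  obtain ⟨b, hb0, hb, rfl⟩ := mem_SArr.mp hH'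
  obtain ⟨s, hs, hsb⟩ := mem_image.mp hb
  -- the edge and `{i₂}` have the same contraction `{i₁}`, so we may assume `s` is not the edge
  obtain ⟨s, hs, hse, hsb⟩ : ∃ s ∈ 𝓕, ¬{i₁, i₂} ⊆ s ∧
      (s.image (collapse i₁ i₂)).subtype (· ≠ i₂) = supp b := by
    by_cases hsub : {i₁, i₂} ⊆ s
    · refine ⟨{i₂}, hsingle i₂, by simp [hne], ?_⟩
      rw [← hsb, hmax s hs hsub]
      simp [collapse, hne]
    · exact ⟨s, hs, hsub, hsb⟩
  obtain ⟨a, hlift, rfl⟩ : ∃ a, supp a = s ∧ contractForm i₁ i₂ c a = b :=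
    ⟨_, supp_liftForm hne hc hse hsb.symm, contractForm_liftForm _ _ _⟩
  refine ⟨kerForm a, mem_SArr.mpr ⟨a, ?_, ?_, rfl⟩, comap_edgeParam_kerForm hne c a⟩
  · obtain ⟨j, hj⟩ := hb0
    rw [← hsb, mem_subtype, mem_image] at hj
    obtain ⟨i, hi, -⟩ := hj
    exact hlift ▸ ⟨i, hi⟩
  · rw [hlift]
    exact mem_erase.mpr ⟨fun h => hse h.ge, hs⟩

theorem image_comap_edgeParam (hne : i₁ ≠ i₂) {c : K} (hc : c ≠ 0)
    {𝓕 : Finset (Finset V)} (hsingle : ∀ i, {i} ∈ 𝓕)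
    (hmax : ∀ s ∈ 𝓕, {i₁, i₂} ⊆ s → s = {i₁, i₂}) {B : Finset (Submodule K (V → K))}
    (hlow : SArr K (𝓕.erase {i₁, i₂}) ⊆ B) (hup : B ⊆ SArr K 𝓕)
    (hB : kerForm (edgeForm i₁ i₂ c) ∉ B) :
    B.image (Submodule.comap (edgeParam hne c)) = SArr K (contractFaces i₁ i₂ 𝓕) := by
  refine Subset.antisymm (image_subset_iff.mpr fun H hH => ?_) fun H' hH' => ?_
  · exact comap_edgeParam_mem_SArr_contractFaces hne hc hmax (hup hH) (ne_of_mem_of_not_mem hH hB)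
  · obtain ⟨H, hH, rfl⟩ := exists_mem_SArr_erase_comap_eq hne hc hsingle hmax hH'
    exact mem_image_of_mem _ (hlow hH)

end EdgeContraction

theorem stmt1_general (ℓ : ℕ) (F : Type) [Field F] [Fintype F] (q : ℕ)
    (hq : Fintype.card F = q)
    (𝓕 : Finset (Finset (Fin ℓ)))
    (hsingle : ∀ i : Fin ℓ, ({i} : Finset (Fin ℓ)) ∈ 𝓕)
    (i₁ i₂ : Fin ℓ) (hne : i₁ ≠ i₂)
    (he : ({i₁, i₂} : Finset (Fin ℓ)) ∈ 𝓕)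
    (hmax : ∀ s ∈ 𝓕, ({i₁, i₂} : Finset (Fin ℓ)) ⊆ s → s = {i₁, i₂})
    (t : ℤ) :
    chi (SArr F 𝓕) t
      = chi (SArr F (𝓕.erase {i₁, i₂})) t
        - ((q : ℤ) - 1) *
          chi (SArr F (𝓕.image fun s : Finset (Fin ℓ) =>
            (s.image fun i => if i = i₂ then i₁ else i).subtype
              fun i => i ≠ i₂)) t := by
  have hdecomp := SArr_eq_SArr_erase_union (K := F) hne he
  have hdeletion :=
    apply_union_eq_sub_card_mul (fun B : Finset (Submodule F (Fin ℓ → F)) => chi B t)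
      (chi (SArr F (contractFaces i₁ i₂ 𝓕)) t) (disjoint_SArr_erase_edgeHyperplanes hne 𝓕)
      fun H hH B hlow hup hHB => by
        obtain ⟨c, hc, rfl⟩ := mem_edgeHyperplanes.mp hH
        rw [chi_insert B hHB (edgeParam_injective hne c) (range_edgeParam hne hc),
          image_comap_edgeParam hne hc hsingle hmax hlow (hdecomp ▸ hup) hHB]
  rw [hdecomp, hdeletion, card_edgeHyperplanes hne, hq, Nat.cast_sub (hq ▸ Fintype.card_pos),
    Nat.cast_one]
  rfl

/-- q-deletion-contraction.  If `e = {i₁,i₂}` is a maximal 2-element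
face of the simplicial complex `Δ`, then
`χ(S_Δ^q, t) = χ(S_{Δ∖e}^q, t) − (q−1)·χ(S_{Δ/e}^q, t)`, where `Δ/e` is the complex on
`{1,…,ℓ}∖{i₂}` whose faces are the images `σ(F)`, `σ` sending `i₂` to `i₁` and fixing
everything else. -/
theorem stmt1 (ℓ : ℕ) (F : Type) [Field F] [Fintype F] (q : ℕ)
    (hq : Fintype.card F = q)
    (𝓕 : Finset (Finset (Fin ℓ)))
    (hdown : ∀ s ∈ 𝓕, ∀ t ⊆ s, t ∈ 𝓕)
    (hsingle : ∀ i : Fin ℓ, ({i} : Finset (Fin ℓ)) ∈ 𝓕)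
    (i₁ i₂ : Fin ℓ) (hne : i₁ ≠ i₂)
    (he : ({i₁, i₂} : Finset (Fin ℓ)) ∈ 𝓕)
    (hmax : ∀ s ∈ 𝓕, ({i₁, i₂} : Finset (Fin ℓ)) ⊆ s → s = {i₁, i₂})
    (t : ℤ) :
    chi (SArr F 𝓕) t
      = chi (SArr F (𝓕.erase {i₁, i₂})) t
        - ((q : ℤ) - 1) *
          chi (SArr F (𝓕.image fun s : Finset (Fin ℓ) =>
            (s.image fun i => if i = i₂ then i₁ else i).subtype
              fun i => i ≠ i₂)) t :=
  stmt1_general ℓ F q hq 𝓕 hsingle i₁ i₂ hne he hmax t
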